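/- Let k be an odd positive integer and define f_k : ℂ → ℂ by f_k(z) = 2 i^k (z/|z|)^k |z| ∫₀^{π/2} e^{-π|z|²(sin θ)²} sin θ sin(kθ) dθ (with f_k(0) = 0). Then there is a constant C > 0, independent of k, such that |f_k(z)| ≤ C/k for all z ∈ ℂ. Specifically, |f_k(z)| ≤ (2/k) ∫₀^{|z|} e^{-π s²}(1 + 2π s²) ds. -/

import Mathlib

/-!
Integrating by parts against `sin (kθ) = -(cos (kθ) / k)'` gains the factor `1/k`; the boundary
terms vanish because `sin 0 = 0` and `cos (kπ/2) = 0` for odd `k`. The derivative of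
`e^{-π r² sin²θ} sin θ` is bounded by `e^{-π r² sin²θ} (1 + 2π r² sin²θ) cos θ`, and the
substitution `s = r sin θ` turns `r` times its integral into `∫₀^r e^{-πs²} (1 + 2πs²) ds`. Since the integrand
is `2 e^{-πs²} - (s e^{-πs²})'`, this is at most twice the Gaussian half-integral `1/2`.
-/

open Real MeasureTheory Complex intervalIntegral

/-- `f_k(z) = 2 i^k (z/|z|)^k |z| ∫₀^{π/2} e^{-π|z|² sin²θ} sin θ sin(kθ) dθ`. -/
noncomputable def fk (k : ℕ) (z : ℂ) : ℂ :=
  2 * Complex.I ^ k * (z / (‖z‖ : ℂ)) ^ k * (‖z‖ : ℂ) *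
    ((∫ θ in (0:ℝ)..(π/2),
      Real.exp (-π * ‖z‖ ^ 2 * Real.sin θ ^ 2) * Real.sin θ * Real.sin (k * θ) : ℝ) : ℂ)

lemma Real.cos_odd_mul_pi_div_two {k : ℕ} (hk : Odd k) : Real.cos (k * (π / 2)) = 0 := by
  obtain ⟨m, rfl⟩ := hk
  rw [Real.cos_eq_zero_iff]
  exact ⟨m, by push_cast; ring⟩

lemma hasDerivAt_neg_cos_mul_div {k : ℝ} (hk : k ≠ 0) (θ : ℝ) :
    HasDerivAt (fun θ => -(Real.cos (k * θ) / k)) (Real.sin (k * θ)) θ := by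
  refine ((((hasDerivAt_id' θ).const_mul k).cos.div_const k).fun_neg).congr_deriv ?_
  field_simp

lemma integral_mul_sin_odd_mul {g g' : ℝ → ℝ}
    (hg : ∀ θ ∈ Set.uIcc 0 (π / 2), HasDerivAt g (g' θ) θ)
    (hg' : IntervalIntegrable g' volume 0 (π / 2)) (hg0 : g 0 = 0) {k : ℕ} (hk : Odd k) :
    ∫ θ in (0:ℝ)..π / 2, g θ * Real.sin (k * θ) =
      (1 / k) * ∫ θ in (0:ℝ)..π / 2, g' θ * Real.cos (k * θ) := by
  have hk0 : (k : ℝ) ≠ 0 := by exact_mod_cast hk.pos.ne'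
  rw [intervalIntegral.integral_mul_deriv_eq_deriv_mul hg
    (fun θ _ => hasDerivAt_neg_cos_mul_div hk0 θ) hg'
    ((by fun_prop : Continuous fun θ : ℝ => Real.sin (k * θ)).intervalIntegrable _ _),
    Real.cos_odd_mul_pi_div_two hk, hg0, ← intervalIntegral.integral_const_mul]
  simp only [zero_div, neg_zero, mul_zero, zero_mul, sub_zero, zero_sub,
    ← intervalIntegral.integral_neg]
  congr 1
  ext θ
  ring

lemma abs_integral_mul_sin_odd_mul_le {g g' : ℝ → ℝ}
    (hg : ∀ θ ∈ Set.uIcc 0 (π / 2), HasDerivAt g (g' θ) θ)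
    (hg' : IntervalIntegrable g' volume 0 (π / 2)) (hg0 : g 0 = 0) {k : ℕ} (hk : Odd k) :
    |∫ θ in (0:ℝ)..π / 2, g θ * Real.sin (k * θ)| ≤ (1 / k) * ∫ θ in (0:ℝ)..π / 2, |g' θ| := by
  have hπ : (0:ℝ) ≤ π / 2 := by positivity
  rw [integral_mul_sin_odd_mul hg hg' hg0 hk, abs_mul, abs_of_nonneg (by positivity)]
  gcongr
  refine (abs_integral_le_integral_abs hπ).trans (integral_mono_on hπ ?_ hg'.abs fun θ _ => ?_)
  · exact (hg'.mul_continuousOn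
      (by fun_prop : Continuous fun θ : ℝ => Real.cos (k * θ)).continuousOn).abs
  · rw [abs_mul]
    exact mul_le_of_le_one_right (abs_nonneg _) (Real.abs_cos_le_one _)

lemma hasDerivAt_exp_mul_sin_sq_mul_sin (c θ : ℝ) :
    HasDerivAt (fun θ => Real.exp (c * Real.sin θ ^ 2) * Real.sin θ)
      (Real.exp (c * Real.sin θ ^ 2) * Real.cos θ * (1 + 2 * c * Real.sin θ ^ 2)) θ := by
  refine ((((Real.hasDerivAt_sin θ).fun_pow 2).const_mul c).exp.mul
    (Real.hasDerivAt_sin θ)).congr_deriv ?_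
  ring

lemma abs_integral_exp_mul_sin_sq_mul_sin_mul_sin_le {c : ℝ} (hc : c ≤ 0) {k : ℕ} (hk : Odd k) :
    |∫ θ in (0:ℝ)..π / 2, Real.exp (c * Real.sin θ ^ 2) * Real.sin θ * Real.sin (k * θ)| ≤
      (1 / k) * ∫ θ in (0:ℝ)..π / 2,
        Real.exp (c * Real.sin θ ^ 2) * Real.cos θ * (1 - 2 * c * Real.sin θ ^ 2) := by
  have hπ : (0:ℝ) ≤ π / 2 := by positivity
  refine (abs_integral_mul_sin_odd_mul_le (fun θ _ => hasDerivAt_exp_mul_sin_sq_mul_sin c θ)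
    (Continuous.intervalIntegrable (by fun_prop) _ _) (by simp) hk).trans ?_
  gcongr
  refine integral_mono_on hπ (Continuous.intervalIntegrable (by fun_prop) _ _)
    (Continuous.intervalIntegrable (by fun_prop) _ _) fun θ hθ => ?_
  have hcos : 0 ≤ Real.cos θ := Real.cos_nonneg_of_mem_Icc ⟨by linarith [hθ.1, pi_pos], hθ.2⟩
  have hsq : 0 ≤ -(c * Real.sin θ ^ 2) := by nlinarith [sq_nonneg (Real.sin θ)]
  rw [abs_mul, abs_of_nonneg (by positivity)]
  gcongr
  exact abs_le.mpr ⟨by linarith, by linarith⟩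

lemma integral_comp_mul_sin_mul_mul_cos {F : ℝ → ℝ} (hF : Continuous F) (r : ℝ) :
    ∫ θ in (0:ℝ)..π / 2, F (r * Real.sin θ) * (r * Real.cos θ) = ∫ s in (0:ℝ)..r, F s := by
  have := integral_comp_mul_deriv (a := 0) (b := π / 2)
    (fun θ _ => (Real.hasDerivAt_sin θ).const_mul r) (by fun_prop) hF
  simpa using this

lemma integral_exp_neg_pi_mul_sq_le {r : ℝ} (hr : 0 ≤ r) :
    ∫ s in (0:ℝ)..r, Real.exp (-π * s ^ 2) ≤ 1 / 2 := by
  rw [integral_of_le hr]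
  calc ∫ s in Set.Ioc 0 r, Real.exp (-π * s ^ 2)
      ≤ ∫ s in Set.Ioi 0, Real.exp (-π * s ^ 2) :=
        setIntegral_mono_set (integrable_exp_neg_mul_sq pi_pos).integrableOn
          (.of_forall fun s => (Real.exp_pos _).le) Set.Ioc_subset_Ioi_self.eventuallyLE
    _ = 1 / 2 := by rw [integral_gaussian_Ioi, div_self pi_ne_zero, Real.sqrt_one]

lemma hasDerivAt_mul_exp_neg_pi_mul_sq (s : ℝ) :
    HasDerivAt (fun s => s * Real.exp (-π * s ^ 2))
      (2 * Real.exp (-π * s ^ 2) - Real.exp (-π * s ^ 2) * (1 + 2 * π * s ^ 2)) s := by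
  refine ((hasDerivAt_id' s).mul (((hasDerivAt_pow 2 s).const_mul (-π)).exp)).congr_deriv ?_
  ring

lemma integral_exp_neg_pi_mul_sq_mul_one_add_le_one {r : ℝ} (hr : 0 ≤ r) :
    ∫ s in (0:ℝ)..r, Real.exp (-π * s ^ 2) * (1 + 2 * π * s ^ 2) ≤ 1 := by
  have hparts : ∫ s in (0:ℝ)..r, Real.exp (-π * s ^ 2) * (1 + 2 * π * s ^ 2) =
      2 * (∫ s in (0:ℝ)..r, Real.exp (-π * s ^ 2)) - r * Real.exp (-π * r ^ 2) := by
    have hftc := integral_eq_sub_of_hasDerivAt (fun s _ => hasDerivAt_mul_exp_neg_pi_mul_sq s)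
      (Continuous.intervalIntegrable (by fun_prop) 0 r)
    rw [intervalIntegral.integral_sub (Continuous.intervalIntegrable (by fun_prop) _ _)
      (Continuous.intervalIntegrable (by fun_prop) _ _),
      intervalIntegral.integral_const_mul] at hftc
    simp only [zero_mul, sub_zero] at hftc
    linarith
  rw [hparts]
  nlinarith [integral_exp_neg_pi_mul_sq_le hr, Real.exp_pos (-π * r ^ 2)]

lemma mul_abs_integral_exp_mul_sin_sq_mul_sin_mul_sin_le {k : ℕ} (hk : Odd k) {r : ℝ} (hr : 0 ≤ r) :
    r * |∫ θ in (0:ℝ)..π / 2,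
        Real.exp (-π * r ^ 2 * Real.sin θ ^ 2) * Real.sin θ * Real.sin (k * θ)| ≤
      (1 / k) * ∫ s in (0:ℝ)..r, Real.exp (-π * s ^ 2) * (1 + 2 * π * s ^ 2) := by
  have hsubst := integral_comp_mul_sin_mul_mul_cos
    (F := fun s => Real.exp (-π * s ^ 2) * (1 + 2 * π * s ^ 2)) (by fun_prop) r
  rw [← hsubst]
  calc _ ≤ r * ((1 / k) * ∫ θ in (0:ℝ)..π / 2, Real.exp (-π * r ^ 2 * Real.sin θ ^ 2) *
          Real.cos θ * (1 - 2 * (-π * r ^ 2) * Real.sin θ ^ 2)) := by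
        gcongr
        exact abs_integral_exp_mul_sin_sq_mul_sin_mul_sin_le (by nlinarith [pi_pos]) hk
    _ = _ := by
        rw [mul_left_comm, ← intervalIntegral.integral_const_mul]
        congr 1
        refine integral_congr fun θ _ => ?_
        simp only [mul_pow]
        ring_nf

lemma norm_fk_le (k : ℕ) (z : ℂ) :
    ‖fk k z‖ ≤ 2 * (‖z‖ * |∫ θ in (0:ℝ)..π / 2,
        Real.exp (-π * ‖z‖ ^ 2 * Real.sin θ ^ 2) * Real.sin θ * Real.sin (k * θ)|) := by
  have hunit : ‖z / (‖z‖ : ℂ)‖ ^ k ≤ 1 := by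
    refine pow_le_one₀ (norm_nonneg _) ?_
    rw [norm_div, Complex.norm_real, norm_norm]
    exact div_self_le_one _
  refine le_of_eq_of_le ?_ (mul_le_of_le_one_right (by positivity) hunit)
  simp only [fk, norm_mul, norm_pow, Complex.norm_I, Complex.norm_two, Complex.norm_real,
    Real.norm_eq_abs, abs_norm, one_pow, mul_one]
  ring

theorem fk_bound :
    ∃ C : ℝ, 0 < C ∧
      ∀ k : ℕ, Odd k →
        ∀ z : ℂ,
          ‖fk k z‖ ≤
              (2 / k) * ∫ s in (0:ℝ)..(‖z‖),
                Real.exp (-π * s ^ 2) * (1 + 2 * π * s ^ 2) ∧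
          ‖fk k z‖ ≤ C / k := by
  refine ⟨2, two_pos, fun k hk z => ?_⟩
  have hbound : ‖fk k z‖ ≤ (2 / k) * ∫ s in (0:ℝ)..(‖z‖),
      Real.exp (-π * s ^ 2) * (1 + 2 * π * s ^ 2) := by
    calc ‖fk k z‖ ≤ _ := norm_fk_le k z
      _ ≤ 2 * ((1 / k) * ∫ s in (0:ℝ)..(‖z‖), Real.exp (-π * s ^ 2) * (1 + 2 * π * s ^ 2)) :=
          mul_le_mul_of_nonneg_left
            (mul_abs_integral_exp_mul_sin_sq_mul_sin_mul_sin_le hk (norm_nonneg z)) two_pos.le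
      _ = _ := by ring
  refine ⟨hbound, hbound.trans ?_⟩
  calc (2 / k : ℝ) * ∫ s in (0:ℝ)..(‖z‖), Real.exp (-π * s ^ 2) * (1 + 2 * π * s ^ 2)
      ≤ 2 / k * 1 := by
        gcongr
        exact integral_exp_neg_pi_mul_sq_mul_one_add_le_one (norm_nonneg z)
    _ = 2 / k := mul_one _
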